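/- For any graph G = ([n], E): gd(G, x) = ed(∇G, φ(x)) for every x ∈ S_+(G), and consequently gd(G) = ed(∇G). -/

import Mathlib

open Matrix Finset

/-- The suspension `∇G` of a graph `G`: a new apex vertex (`none`) is added, adjacent to
all vertices of `G`. -/
def suspension {V : Type} (G : SimpleGraph V) : SimpleGraph (Option V) where
  Adj u w :=
    match u, w with
    | none, none => False
    | none, some _ => True
    | some _, none => True
    | some a, some b => G.Adj a b
  symm := by
    constructor
    rintro (_ | u) (_ | w) h
    · exact h
    · trivial
    · trivial
    · exact h.symm
  loopless := by
    constructor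
    rintro (_ | u) h
    · exact h
    · exact G.irrefl h

/-- `a` has a Gram representation in `ℝ^k` for the graph `G`: vectors `p i` with
`⟪p i, p i⟫ = a i i` for all vertices and `⟪p i, p j⟫ = a i j` for all edges. -/
def HasGramRep {V : Type} [Fintype V] (G : SimpleGraph V) (a : V → V → ℝ) (k : ℕ) : Prop :=
  ∃ p : V → (Fin k → ℝ),
    (∀ i, ∑ t, p i t * p i t = a i i) ∧
    (∀ i j, G.Adj i j → ∑ t, p i t * p j t = a i j)

/-- `gd(G, a)`: the smallest `k` such that `a` has a Gram representation in `ℝ^k`. -/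
noncomputable def gdOf {V : Type} [Fintype V] (G : SimpleGraph V) (a : V → V → ℝ) : ℕ :=
  sInf {k : ℕ | HasGramRep G a k}

/-- `gd(G)` as the maximum of `gd(G, a)` over all `a ∈ S₊(G)`. -/
noncomputable def gdSup {V : Type} [Fintype V] (G : SimpleGraph V) : ℕ :=
  sSup {m : ℕ | ∃ a : V → V → ℝ, (∃ k, HasGramRep G a k) ∧ gdOf G a = m}

/-- `d` has a Euclidean (distance) representation in `ℝ^k` for the graph `G`:
vectors `p i` with `‖p i − p j‖² = d i j` for all edges. -/
def HasEucRep {V : Type} [Fintype V] (G : SimpleGraph V) (d : V → V → ℝ) (k : ℕ) : Prop :=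
  ∃ p : V → (Fin k → ℝ),
    ∀ i j, G.Adj i j → ∑ t, (p i t - p j t) ^ 2 = d i j

/-- `ed(G, d)`: the smallest `k` such that `d` has a Euclidean representation in `ℝ^k`. -/
noncomputable def edOf {V : Type} [Fintype V] (G : SimpleGraph V) (d : V → V → ℝ) : ℕ :=
  sInf {k : ℕ | HasEucRep G d k}

/-- `ed(G)`: the maximum of `ed(G, d)` over all `d ∈ EDM(G)`. -/
noncomputable def edSup {V : Type} [Fintype V] (G : SimpleGraph V) : ℕ :=
  sSup {m : ℕ | ∃ d : V → V → ℝ, (∃ k, HasEucRep G d k) ∧ edOf G d = m}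

/-- The map `φ` sending partial Gram data `x` on `G` (indexed by the diagonal and the
edges) to partial distance data `d = φ(x)` on the suspension `∇G` (apex `none`):
`d_{0i} = x_{ii}` and `d_{ij} = x_{ii} + x_{jj} − 2 x_{ij}`. -/
def phi {V : Type} (x : V → V → ℝ) : Option V → Option V → ℝ
  | none, none => 0
  | none, some i => x i i
  | some i, none => x i i
  | some i, some j => x i i + x j j - 2 * x i j

/-!
A Gram representation `p` of `x` becomes a Euclidean representation of `φ(x)` on `∇G` by
placing the apex at the origin, and a Euclidean representation `q` of `φ(x)` becomes a Gram
representation of `x` by translating the apex to the origin, `p i = q i - q 0`; both moves keep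
the dimension. Moreover, the squared distances of any configuration `q` on `∇G` are exactly
`φ` of the Gram matrix of the translated vectors, so every `d ∈ EDM(∇G)` is of the form `φ(x)`
on the edges of `∇G`, which gives `gd(G) = ed(∇G)`.
-/

def gramOf {ι : Type} {k : ℕ} (p : ι → Fin k → ℝ) (i j : ι) : ℝ :=
  ∑ t, p i t * p j t

def sqDistOf {ι : Type} {k : ℕ} (q : ι → Fin k → ℝ) (u w : ι) : ℝ :=
  ∑ t, (q u t - q w t) ^ 2

lemma sqDistOf_eq_gramOf {ι : Type} {k : ℕ} (p : ι → Fin k → ℝ) (i j : ι) :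
    sqDistOf p i j = gramOf p i i + gramOf p j j - 2 * gramOf p i j := by
  simp only [sqDistOf, gramOf, Finset.mul_sum, ← Finset.sum_add_distrib,
    ← Finset.sum_sub_distrib]
  exact Finset.sum_congr rfl fun t _ => by ring

lemma sqDistOf_comm {ι : Type} {k : ℕ} (q : ι → Fin k → ℝ) (u w : ι) :
    sqDistOf q u w = sqDistOf q w u :=
  Finset.sum_congr rfl fun t _ => by ring

lemma hasGramRep_iff_exists_gramOf {V : Type} [Fintype V] (G : SimpleGraph V)
    (x : V → V → ℝ) (k : ℕ) :
    HasGramRep G x k ↔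
      ∃ p : V → Fin k → ℝ,
        (∀ i, gramOf p i i = x i i) ∧ ∀ i j, G.Adj i j → gramOf p i j = x i j :=
  Iff.rfl

lemma hasEucRep_iff_exists_sqDistOf {V : Type} [Fintype V] (G : SimpleGraph V)
    (d : V → V → ℝ) (k : ℕ) :
    HasEucRep G d k ↔
      ∃ q : V → Fin k → ℝ, ∀ u w, G.Adj u w → sqDistOf q u w = d u w :=
  Iff.rfl

lemma edOf_congr {V : Type} [Fintype V] (G : SimpleGraph V) {d d' : V → V → ℝ}
    (h : ∀ u w, G.Adj u w → d u w = d' u w) : edOf G d = edOf G d' := by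
  unfold edOf
  congr 1
  ext k
  simp only [Set.mem_ofPred_eq, hasEucRep_iff_exists_sqDistOf]
  refine exists_congr fun q => forall₂_congr fun u w => forall_congr' fun huw => ?_
  rw [h u w huw]

lemma phi_eq_on_suspension_iff {V : Type} (G : SimpleGraph V) (x y : V → V → ℝ) :
    (∀ u w, (suspension G).Adj u w → phi x u w = phi y u w) ↔
      (∀ i, x i i = y i i) ∧ ∀ i j, G.Adj i j → x i j = y i j := by
  constructor
  · intro h
    have hdiag (i : V) : x i i = y i i := h none (some i) trivial
    refine ⟨hdiag, fun i j hij => ?_⟩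
    have hedge : x i i + x j j - 2 * x i j = y i i + y j j - 2 * y i j := h (some i) (some j) hij
    linarith [hdiag i, hdiag j]
  · rintro ⟨hdiag, hedge⟩ (_ | i) (_ | j) h
    · exact h.elim
    · exact hdiag j
    · exact hdiag i
    · simp only [phi, hdiag, hedge i j h]

def fromApex {V : Type} {k : ℕ} (q : Option V → Fin k → ℝ) (i : V) : Fin k → ℝ :=
  q (some i) - q none

lemma phi_gramOf_fromApex {V : Type} {k : ℕ} (q : Option V → Fin k → ℝ) :
    phi (gramOf (fromApex q)) = sqDistOf q := by
  have hdiag (i : V) : gramOf (fromApex q) i i = sqDistOf q none (some i) :=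
    Finset.sum_congr rfl fun t _ => by simp only [fromApex, Pi.sub_apply]; ring
  funext u w
  rcases u with _ | i <;> rcases w with _ | j
  · simp [phi, sqDistOf]
  · exact hdiag j
  · rw [sqDistOf_comm]; exact hdiag i
  · rw [phi, ← sqDistOf_eq_gramOf]
    exact Finset.sum_congr rfl fun t _ => by simp only [fromApex, Pi.sub_apply]; ring

lemma fromApex_elim_zero {V : Type} {k : ℕ} (p : V → Fin k → ℝ) :
    fromApex (fun o => o.elim 0 p) = p := by
  funext i
  simp [fromApex]

theorem hasGramRep_iff_hasEucRep_phi {V : Type} [Fintype V] (G : SimpleGraph V)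
    (x : V → V → ℝ) (k : ℕ) :
    HasGramRep G x k ↔ HasEucRep (suspension G) (phi x) k := by
  rw [hasGramRep_iff_exists_gramOf, hasEucRep_iff_exists_sqDistOf]
  constructor
  · rintro ⟨p, hp⟩
    refine ⟨fun o => o.elim 0 p, ?_⟩
    rw [← phi_gramOf_fromApex, fromApex_elim_zero]
    exact (phi_eq_on_suspension_iff G _ _).2 hp
  · rintro ⟨q, hq⟩
    refine ⟨fromApex q, (phi_eq_on_suspension_iff G _ _).1 ?_⟩
    rwa [phi_gramOf_fromApex]

theorem gdOf_eq_edOf_phi {V : Type} [Fintype V] (G : SimpleGraph V) (x : V → V → ℝ) :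
    gdOf G x = edOf (suspension G) (phi x) := by
  unfold gdOf edOf
  simp only [hasGramRep_iff_hasEucRep_phi]

/-- For any graph `G`: `gd(G, x) = ed(∇G, φ(x))` for every `x ∈ S₊(G)`, and consequently
`gd(G) = ed(∇G)`. -/
theorem gdOf_eq_edOf_suspension {V : Type} [Fintype V] (G : SimpleGraph V) :
    (∀ x : V → V → ℝ, (∃ k, HasGramRep G x k) →
      gdOf G x = edOf (suspension G) (phi x)) ∧
    gdSup G = edSup (suspension G) := by
  refine ⟨fun x _ => gdOf_eq_edOf_phi G x, ?_⟩
  unfold gdSup edSup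
  congr 1
  ext m
  constructor
  · rintro ⟨x, ⟨k, hk⟩, rfl⟩
    exact ⟨phi x, ⟨k, (hasGramRep_iff_hasEucRep_phi G x k).1 hk⟩,
      (gdOf_eq_edOf_phi G x).symm⟩
  · rintro ⟨d, ⟨k, q, hq⟩, rfl⟩
    have hx : HasGramRep G (gramOf (fromApex q)) k :=
      ⟨fromApex q, fun _ => rfl, fun _ _ _ => rfl⟩
    refine ⟨gramOf (fromApex q), ⟨k, hx⟩, ?_⟩
    rw [gdOf_eq_edOf_phi, phi_gramOf_fromApex]
    exact edOf_congr _ hq
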